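/- arXiv:2009.01161 — 2 statements merged into one kernel-verified Lean document; each statement's English description precedes it below -/
import Mathlib

section
/- For any four (possibly correlated) discrete random variables A, B, C, D on a finite probability space: if A is conditionally independent of D given C, then the conditional mutual information satisfies I(A ; B | C) ≤ I(A ; B | C, D). -/
open Finset
open scoped Classical

universe u v w x y

variable {Ω : Type u} {α : Type v} {β : Type w} {γ : Type x} {η : Type y}

/-- Probability that the random variable `X` takes the value `a`, under the
probability mass function `p` on the finite sample space `Ω`. -/
noncomputable def pr [Fintype Ω] (p : Ω → ℝ) (X : Ω → α) (a : α) : ℝ :=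
  ∑ ω, if X ω = a then p ω else 0

/-- Shannon entropy (in bits) of a discrete random variable `X`. -/
noncomputable def Hent [Fintype Ω] [Fintype α] (p : Ω → ℝ) (X : Ω → α) : ℝ :=
  - ∑ a, pr p X a * Real.logb 2 (pr p X a)

/-- Conditional entropy `H(X | Y) = H(X, Y) - H(Y)`. -/
noncomputable def condH [Fintype Ω] [Fintype α] [Fintype β]
    (p : Ω → ℝ) (X : Ω → α) (Y : Ω → β) : ℝ :=
  Hent p (fun ω => (X ω, Y ω)) - Hent p Y

/-- Mutual information `I(X ; Y) = H(X) - H(X | Y)`. -/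
noncomputable def mi [Fintype Ω] [Fintype α] [Fintype β]
    (p : Ω → ℝ) (X : Ω → α) (Y : Ω → β) : ℝ :=
  Hent p X - condH p X Y

/-- Conditional mutual information `I(X ; Y | Z) = H(X | Z) - H(X | Y, Z)`. -/
noncomputable def cmi [Fintype Ω] [Fintype α] [Fintype β] [Fintype γ]
    (p : Ω → ℝ) (X : Ω → α) (Y : Ω → β) (Z : Ω → γ) : ℝ :=
  condH p X Z - condH p X (fun ω => (Y ω, Z ω))

/-- `A` is conditionally independent of `D` given `C` (stated in a
division-free form that also covers zero-probability conditioning values). -/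
def CondIndepRV [Fintype Ω]
    (p : Ω → ℝ) (A : Ω → α) (D : Ω → β) (C : Ω → γ) : Prop :=
  ∀ (a : α) (d : β) (c : γ),
    pr p (fun ω => (A ω, D ω, C ω)) (a, d, c) * pr p C c =
      pr p (fun ω => (A ω, C ω)) (a, c) * pr p (fun ω => (D ω, C ω)) (d, c)

section Helpers
variable [Fintype Ω] (p : Ω → ℝ)

lemma pr_nonneg (hp : ∀ ω, 0 ≤ p ω) (X : Ω → α) (a : α) : 0 ≤ pr p X a := by
  unfold pr; apply Finset.sum_nonneg; intro ω _; split <;> simp [hp ω]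

lemma pr_le_pr (hp : ∀ ω, 0 ≤ p ω) {X : Ω → α} {Y : Ω → β} {a : α} {b : β}
    (h : ∀ ω, X ω = a → Y ω = b) : pr p X a ≤ pr p Y b := by
  unfold pr; apply Finset.sum_le_sum; intro ω _
  by_cases hx : X ω = a
  · simp [hx, h ω hx]
  · simp only [hx, if_false]; split <;> simp [hp ω]

lemma sum_pr [Fintype α] (X : Ω → α) : ∑ a, pr p X a = ∑ ω, p ω := by
  unfold pr; rw [Finset.sum_comm]
  exact Finset.sum_congr rfl fun ω _ => by simp

lemma pr_snd [Fintype α] (X : Ω → α) (Z : Ω → γ) (z : γ) :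
    ∑ x, pr p (fun ω => (X ω, Z ω)) (x, z) = pr p Z z := by
  unfold pr; rw [Finset.sum_comm]
  refine Finset.sum_congr rfl fun ω _ => ?_
  by_cases hz : Z ω = z <;> simp [Prod.ext_iff, hz]

lemma pr_marg_mid [Fintype β] (X : Ω → α) (Y : Ω → β) (Z : Ω → γ) (x : α) (z : γ) :
    ∑ y, pr p (fun ω => (X ω, Y ω, Z ω)) (x, y, z) = pr p (fun ω => (X ω, Z ω)) (x, z) := by
  unfold pr; rw [Finset.sum_comm]
  refine Finset.sum_congr rfl fun ω _ => ?_
  by_cases hx : X ω = x <;> by_cases hz : Z ω = z <;> simp [Prod.ext_iff, hx, hz]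

lemma pr_marg_fst [Fintype α] (X : Ω → α) (Y : Ω → β) (Z : Ω → γ) (y : β) (z : γ) :
    ∑ x, pr p (fun ω => (X ω, Y ω, Z ω)) (x, y, z) = pr p (fun ω => (Y ω, Z ω)) (y, z) := by
  unfold pr; rw [Finset.sum_comm]
  refine Finset.sum_congr rfl fun ω _ => ?_
  by_cases hy : Y ω = y <;> by_cases hz : Z ω = z <;> simp [Prod.ext_iff, hy, hz]

noncomputable def Ssum [Fintype α] (p : Ω → ℝ) (X : Ω → α) : ℝ :=
  ∑ a, pr p X a * Real.log (pr p X a)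

lemma Hent_eq [Fintype α] (X : Ω → α) : Hent p X = -(Ssum p X) / Real.log 2 := by
  unfold Hent Ssum Real.logb
  rw [neg_div, neg_inj, Finset.sum_div]
  exact Finset.sum_congr rfl fun a _ => by ring

lemma Ssum_comp [Fintype α] [Fintype β] (f : α → β) (hf : Function.Injective f)
    (X : Ω → α) (Y : Ω → β) (hY : ∀ ω, Y ω = f (X ω)) : Ssum p Y = Ssum p X := by
  have hpr : ∀ a, pr p Y (f a) = pr p X a := by
    intro a; unfold pr
    refine Finset.sum_congr rfl fun ω _ => ?_
    rw [hY ω, hf.eq_iff]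
  have h0 : ∀ b ∉ Finset.univ.image f, pr p Y b = 0 := by
    intro b hb
    unfold pr
    apply Finset.sum_eq_zero
    intro ω _
    have : Y ω ≠ b := by
      intro hh
      exact hb (by rw [← hh, hY ω]; exact Finset.mem_image_of_mem f (Finset.mem_univ _))
    simp [this]
  unfold Ssum
  rw [← Finset.sum_subset (Finset.subset_univ (Finset.univ.image f))
      (fun b _ hb => by rw [h0 b hb]; simp)]
  rw [Finset.sum_image (fun a _ b _ hab => hf hab)]
  exact Finset.sum_congr rfl fun a _ => by rw [hpr a]

lemma gibbs {ι : Type*} (s : Finset ι) (P Q : ι → ℝ)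
    (hP : ∀ i ∈ s, 0 ≤ P i) (hQ : ∀ i ∈ s, 0 ≤ Q i)
    (hPQ : ∀ i ∈ s, 0 < P i → 0 < Q i)
    (hsum : ∑ i ∈ s, Q i ≤ ∑ i ∈ s, P i) :
    ∑ i ∈ s, P i * Real.log (Q i) ≤ ∑ i ∈ s, P i * Real.log (P i) := by
  have key : ∀ i ∈ s, P i * Real.log (Q i) - P i * Real.log (P i) ≤ Q i - P i := by
    intro i hi
    rcases eq_or_lt_of_le (hP i hi) with h0 | h0
    · rw [← h0]; simpa using hQ i hi
    · have hq := hPQ i hi h0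
      have hlog : Real.log (Q i / P i) ≤ Q i / P i - 1 :=
        Real.log_le_sub_one_of_pos (div_pos hq h0)
      rw [Real.log_div (ne_of_gt hq) (ne_of_gt h0)] at hlog
      have h2 := mul_le_mul_of_nonneg_left hlog (le_of_lt h0)
      have h3 : P i * (Q i / P i - 1) = Q i - P i := by field_simp
      nlinarith
  have h4 : ∑ i ∈ s, (P i * Real.log (Q i) - P i * Real.log (P i)) ≤ ∑ i ∈ s, (Q i - P i) :=
    Finset.sum_le_sum key
  rw [Finset.sum_sub_distrib, Finset.sum_sub_distrib] at h4
  linarith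

variable [Fintype α] [Fintype β] [Fintype γ]

/-- `∑ f·log g₁` marginalizes to `∑ g₁·log g₁`. -/
lemma sum_logg1 (X : Ω → α) (Y : Ω → β) (Z : Ω → γ) :
    ∑ t : α × β × γ, pr p (fun ω => (X ω, Y ω, Z ω)) t *
      Real.log (pr p (fun ω => (X ω, Z ω)) (t.1, t.2.2)) =
    Ssum p (fun ω => (X ω, Z ω)) := by
  rw [Ssum, Fintype.sum_prod_type, Fintype.sum_prod_type]
  simp only [Fintype.sum_prod_type]
  refine Finset.sum_congr rfl fun x _ => ?_
  rw [Finset.sum_comm]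
  refine Finset.sum_congr rfl fun z _ => ?_
  rw [← Finset.sum_mul, pr_marg_mid]

lemma sum_logg2 (X : Ω → α) (Y : Ω → β) (Z : Ω → γ) :
    ∑ t : α × β × γ, pr p (fun ω => (X ω, Y ω, Z ω)) t *
      Real.log (pr p (fun ω => (Y ω, Z ω)) (t.2.1, t.2.2)) =
    Ssum p (fun ω => (Y ω, Z ω)) := by
  rw [Ssum]
  simp only [Fintype.sum_prod_type]
  rw [Finset.sum_comm]
  refine Finset.sum_congr rfl fun y _ => ?_
  rw [Finset.sum_comm]
  refine Finset.sum_congr rfl fun z _ => ?_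
  rw [← Finset.sum_mul, pr_marg_fst]

lemma sum_logg3 (X : Ω → α) (Y : Ω → β) (Z : Ω → γ) :
    ∑ t : α × β × γ, pr p (fun ω => (X ω, Y ω, Z ω)) t *
      Real.log (pr p Z t.2.2) =
    Ssum p Z := by
  rw [Ssum]
  simp only [Fintype.sum_prod_type]
  have h1 : ∀ x, (∑ y, ∑ z, pr p (fun ω => (X ω, Y ω, Z ω)) (x, y, z) * Real.log (pr p Z z))
      = ∑ z, pr p (fun ω => (X ω, Z ω)) (x, z) * Real.log (pr p Z z) := by
    intro x
    rw [Finset.sum_comm]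
    exact Finset.sum_congr rfl fun z _ => by rw [← Finset.sum_mul, pr_marg_mid]
  rw [Finset.sum_congr rfl fun x _ => h1 x, Finset.sum_comm]
  exact Finset.sum_congr rfl fun z _ => by rw [← Finset.sum_mul, pr_snd]

/-- Nonnegativity of conditional mutual information, in `Ssum` form. -/
lemma Ssum_submodular (hp : ∀ ω, 0 ≤ p ω) (hs : ∑ ω, p ω = 1)
    (X : Ω → α) (Y : Ω → β) (Z : Ω → γ) :
    Ssum p (fun ω => (X ω, Z ω)) + Ssum p (fun ω => (Y ω, Z ω)) - Ssum p Z ≤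
      Ssum p (fun ω => (X ω, Y ω, Z ω)) := by
  set f : α × β × γ → ℝ := pr p (fun ω => (X ω, Y ω, Z ω)) with hf
  set Q : α × β × γ → ℝ := fun t =>
    pr p (fun ω => (X ω, Z ω)) (t.1, t.2.2) * pr p (fun ω => (Y ω, Z ω)) (t.2.1, t.2.2)
      / pr p Z t.2.2 with hQdef
  have hfpos : ∀ t, 0 ≤ f t := fun t => pr_nonneg p hp _ t
  have hg1 : ∀ t : α × β × γ, f t ≤ pr p (fun ω => (X ω, Z ω)) (t.1, t.2.2) := by
    rintro ⟨x, y, z⟩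
    exact pr_le_pr p hp fun ω hω => by
      simp only [Prod.ext_iff] at hω ⊢; exact ⟨hω.1, hω.2.2⟩
  have hg2 : ∀ t : α × β × γ, f t ≤ pr p (fun ω => (Y ω, Z ω)) (t.2.1, t.2.2) := by
    rintro ⟨x, y, z⟩
    exact pr_le_pr p hp fun ω hω => by
      simp only [Prod.ext_iff] at hω ⊢; exact ⟨hω.2.1, hω.2.2⟩
  have hg3 : ∀ t : α × β × γ, f t ≤ pr p Z t.2.2 := by
    rintro ⟨x, y, z⟩
    exact pr_le_pr p hp fun ω hω => by
      simp only [Prod.ext_iff] at hω; exact hω.2.2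
  have hQ0 : ∀ t, 0 ≤ Q t := fun t => by
    apply div_nonneg (mul_nonneg (pr_nonneg p hp _ _) (pr_nonneg p hp _ _)) (pr_nonneg p hp _ _)
  have hPQ : ∀ t : α × β × γ, 0 < f t → 0 < Q t := by
    intro t ht
    exact div_pos (mul_pos (lt_of_lt_of_le ht (hg1 t)) (lt_of_lt_of_le ht (hg2 t)))
      (lt_of_lt_of_le ht (hg3 t))
  have hsumf : ∑ t : α × β × γ, f t = 1 := by rw [hf, sum_pr, hs]
  have hsumQ : ∑ t : α × β × γ, Q t ≤ 1 := by
    have h1 : ∑ t : α × β × γ, Q t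
        = ∑ x, ∑ z, pr p (fun ω => (X ω, Z ω)) (x, z) * pr p Z z / pr p Z z := by
      rw [hQdef]
      simp only [Fintype.sum_prod_type]
      refine Finset.sum_congr rfl fun x _ => ?_
      rw [Finset.sum_comm]
      refine Finset.sum_congr rfl fun z _ => ?_
      rw [← Finset.sum_div, ← Finset.mul_sum, pr_snd]
    rw [h1, Finset.sum_comm]
    have h2 : ∀ z, (∑ x, pr p (fun ω => (X ω, Z ω)) (x, z) * pr p Z z / pr p Z z)
        = pr p Z z * pr p Z z / pr p Z z := by
      intro z; rw [← Finset.sum_div, ← Finset.sum_mul, pr_snd]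
    calc (∑ z, ∑ x, pr p (fun ω => (X ω, Z ω)) (x, z) * pr p Z z / pr p Z z)
        ≤ ∑ z, pr p Z z := by
          apply Finset.sum_le_sum
          intro z _
          rw [h2 z]
          by_cases hz : pr p Z z = 0
          · simp [hz]
          · rw [mul_div_assoc, div_self hz, mul_one]
      _ = 1 := by rw [sum_pr, hs]
  have hgibbs := gibbs Finset.univ f Q (fun t _ => hfpos t) (fun t _ => hQ0 t)
    (fun t _ => hPQ t) (by rw [hsumf]; exact hsumQ)
  have hlogQ : ∀ t : α × β × γ, f t * Real.log (Q t) =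
      f t * (Real.log (pr p (fun ω => (X ω, Z ω)) (t.1, t.2.2))
        + Real.log (pr p (fun ω => (Y ω, Z ω)) (t.2.1, t.2.2))
        - Real.log (pr p Z t.2.2)) := by
    intro t
    rcases eq_or_lt_of_le (hfpos t) with h0 | h0
    · rw [← h0]; ring
    · have p1 := lt_of_lt_of_le h0 (hg1 t)
      have p2 := lt_of_lt_of_le h0 (hg2 t)
      have p3 := lt_of_lt_of_le h0 (hg3 t)
      rw [hQdef]
      rw [Real.log_div (ne_of_gt (mul_pos p1 p2)) (ne_of_gt p3),
        Real.log_mul (ne_of_gt p1) (ne_of_gt p2)]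
  have hexp : ∑ t : α × β × γ, f t * Real.log (Q t)
      = Ssum p (fun ω => (X ω, Z ω)) + Ssum p (fun ω => (Y ω, Z ω)) - Ssum p Z := by
    rw [Finset.sum_congr rfl fun t _ => hlogQ t]
    simp only [mul_add, mul_sub]
    rw [Finset.sum_sub_distrib, Finset.sum_add_distrib, sum_logg1, sum_logg2, sum_logg3]
  have hSsum : ∑ t : α × β × γ, f t * Real.log (f t) = Ssum p (fun ω => (X ω, Y ω, Z ω)) := rfl
  rw [hexp, hSsum] at hgibbs
  exact hgibbs

/-- Conditional independence makes conditional mutual information vanish. -/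
lemma Ssum_condindep (hp : ∀ ω, 0 ≤ p ω)
    (A : Ω → α) (D : Ω → β) (C : Ω → γ) (h : CondIndepRV p A D C) :
    Ssum p (fun ω => (A ω, D ω, C ω)) =
      Ssum p (fun ω => (A ω, C ω)) + Ssum p (fun ω => (D ω, C ω)) - Ssum p C := by
  set f : α × β × γ → ℝ := pr p (fun ω => (A ω, D ω, C ω)) with hf
  have hfpos : ∀ t, 0 ≤ f t := fun t => pr_nonneg p hp _ t
  have hg1 : ∀ t : α × β × γ, f t ≤ pr p (fun ω => (A ω, C ω)) (t.1, t.2.2) := by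
    rintro ⟨x, y, z⟩
    exact pr_le_pr p hp fun ω hω => by
      simp only [Prod.ext_iff] at hω ⊢; exact ⟨hω.1, hω.2.2⟩
  have hg2 : ∀ t : α × β × γ, f t ≤ pr p (fun ω => (D ω, C ω)) (t.2.1, t.2.2) := by
    rintro ⟨x, y, z⟩
    exact pr_le_pr p hp fun ω hω => by
      simp only [Prod.ext_iff] at hω ⊢; exact ⟨hω.2.1, hω.2.2⟩
  have hg3 : ∀ t : α × β × γ, f t ≤ pr p C t.2.2 := by
    rintro ⟨x, y, z⟩
    exact pr_le_pr p hp fun ω hω => by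
      simp only [Prod.ext_iff] at hω; exact hω.2.2
  have hterm : ∀ t : α × β × γ, f t * Real.log (f t) =
      f t * (Real.log (pr p (fun ω => (A ω, C ω)) (t.1, t.2.2))
        + Real.log (pr p (fun ω => (D ω, C ω)) (t.2.1, t.2.2))
        - Real.log (pr p C t.2.2)) := by
    rintro ⟨a, d, c⟩
    rcases eq_or_lt_of_le (hfpos (a, d, c)) with h0 | h0
    · rw [← h0]; ring
    · have p3 := lt_of_lt_of_le h0 (hg3 (a, d, c))
      have hmul := h a d c
      have p12 : 0 < pr p (fun ω => (A ω, C ω)) (a, c) * pr p (fun ω => (D ω, C ω)) (d, c) := by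
        rw [← hmul]; exact mul_pos h0 p3
      have p1 : 0 < pr p (fun ω => (A ω, C ω)) (a, c) :=
        lt_of_le_of_ne (pr_nonneg p hp _ _) (fun e => by rw [← e, zero_mul] at p12; exact lt_irrefl 0 p12)
      have p2 : 0 < pr p (fun ω => (D ω, C ω)) (d, c) :=
        lt_of_le_of_ne (pr_nonneg p hp _ _) (fun e => by rw [← e, mul_zero] at p12; exact lt_irrefl 0 p12)
      have hl : Real.log (f (a, d, c)) + Real.log (pr p C c)
          = Real.log (pr p (fun ω => (A ω, C ω)) (a, c))
            + Real.log (pr p (fun ω => (D ω, C ω)) (d, c)) := by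
        rw [← Real.log_mul (ne_of_gt h0) (ne_of_gt p3),
          ← Real.log_mul (ne_of_gt p1) (ne_of_gt p2), hmul]
      have hlf : Real.log (f (a, d, c))
          = Real.log (pr p (fun ω => (A ω, C ω)) (a, c))
            + Real.log (pr p (fun ω => (D ω, C ω)) (d, c)) - Real.log (pr p C c) := by
        linarith
      rw [hlf]
  calc Ssum p (fun ω => (A ω, D ω, C ω)) = ∑ t : α × β × γ, f t * Real.log (f t) := rfl
    _ = _ := by
      rw [Finset.sum_congr rfl fun t _ => hterm t]
      simp only [mul_add, mul_sub]
      rw [Finset.sum_sub_distrib, Finset.sum_add_distrib, sum_logg1, sum_logg2, sum_logg3]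

end Helpers

/-- If `A ⊥ D | C`, then `I(A ; B | C) ≤ I(A ; B | C, D)`. -/
theorem stmt1 [Fintype Ω] [Fintype α] [Fintype β] [Fintype γ] [Fintype η]
    (p : Ω → ℝ) (hp : ∀ ω, 0 ≤ p ω) (hsum : ∑ ω, p ω = 1)
    (A : Ω → α) (B : Ω → β) (C : Ω → γ) (D : Ω → η)
    (h : CondIndepRV p A D C) :
    cmi p A B C ≤ cmi p A B (fun ω => (C ω, D ω)) := by
  have L : (0:ℝ) < Real.log 2 := Real.log_pos (by norm_num)
  have r1 : Ssum p (fun ω => (A ω, (C ω, D ω))) = Ssum p (fun ω => (A ω, D ω, C ω)) :=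
    Ssum_comp p (fun t : α × η × γ => (t.1, (t.2.2, t.2.1)))
      (by rintro ⟨a, d, c⟩ ⟨a', d', c'⟩ hh; simp only [Prod.ext_iff] at hh ⊢; tauto)
      _ _ (fun ω => rfl)
  have r2 : Ssum p (fun ω => (C ω, D ω)) = Ssum p (fun ω => (D ω, C ω)) :=
    Ssum_comp p (fun t : η × γ => (t.2, t.1))
      (by rintro ⟨d, c⟩ ⟨d', c'⟩ hh; simp only [Prod.ext_iff] at hh ⊢; tauto)
      _ _ (fun ω => rfl)
  have r3 : Ssum p (fun ω => (A ω, (B ω, (C ω, D ω))))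
      = Ssum p (fun ω => (A ω, D ω, (B ω, C ω))) :=
    Ssum_comp p (fun t : α × η × (β × γ) => (t.1, (t.2.2.1, (t.2.2.2, t.2.1))))
      (by rintro ⟨a, d, b, c⟩ ⟨a', d', b', c'⟩ hh; simp only [Prod.ext_iff] at hh ⊢; tauto)
      _ _ (fun ω => rfl)
  have r4 : Ssum p (fun ω => (B ω, (C ω, D ω))) = Ssum p (fun ω => (D ω, (B ω, C ω))) :=
    Ssum_comp p (fun t : η × (β × γ) => (t.2.1, (t.2.2, t.1)))
      (by rintro ⟨d, b, c⟩ ⟨d', b', c'⟩ hh; simp only [Prod.ext_iff] at hh ⊢; tauto)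
      _ _ (fun ω => rfl)
  have hI := Ssum_condindep p hp A D C h
  have hsub := Ssum_submodular p hp hsum A D (fun ω => (B ω, C ω))
  simp only [cmi, condH, Hent_eq]
  have e : ∀ u v w q : ℝ,
      -u / Real.log 2 - -v / Real.log 2 - (-w / Real.log 2 - -q / Real.log 2)
        = (-u + v + w - q) / Real.log 2 := by intros; ring
  rw [e, e, div_le_div_iff_of_pos_right L]
  rw [r1, r2, r3, r4]
  linarith
end

section
/- Let G = (L ⊔ R, E) be a bipartite graph constructed from a directed graph H = (V_H, E_H) with designated vertices s, t ∈ V_H (s having no incoming edges, t no outgoing edges) as follows: for each v ∈ V_H \ {s,t} there are vertices v^ℓ ∈ L and v^r ∈ R joined by an edge; additionally s^ℓ ∈ L and t^r ∈ R; and for each directed edge (u,v) ∈ E_H there is an undirected edge (u^ℓ, v^r). Then G has a perfect matching if and only if there is a directed path from s to t in H. -/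
/-!
Extend a perfect matching `M` of the gadget to a permutation `σ` of `V` by `σ t = s`. Every
vertex other than `t` is either fixed by `σ` (a split edge) or sent along an edge of `H`, so
following the cycle of `σ` through `s` until it reaches `t` is a directed path from `s` to `t`.
Conversely, a simple path `s = v₀ → ⋯ → vₖ = t` closed up into the cycle `(v₀ v₁ ⋯ vₖ)`,
with every other vertex fixed, is such a permutation.
-/

open Equiv Relation

section

variable {α : Type*} {r : α → α → Prop} {a b : α}

theorem Relation.ReflTransGen.exists_nodup_isChain (h : ReflTransGen r a b) :
    ∃ l : List α, l.head? = some a ∧ l.getLast? = some b ∧ l.IsChain r ∧ l.Nodup := by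
  induction h using Relation.ReflTransGen.head_induction_on with
  | refl => exact ⟨[b], rfl, rfl, List.isChain_singleton _, List.nodup_singleton _⟩
  | @head a c hac _ ih =>
    obtain ⟨l, hhead, hlast, hchain, hnodup⟩ := ih
    by_cases ha : a ∈ l
    · -- `a` already lies on the path: cut off the loop back to it
      obtain ⟨l₁, l₂, rfl⟩ := List.append_of_mem ha
      refine ⟨a :: l₂, rfl, ?_, hchain.suffix (List.suffix_append _ _), hnodup.of_append_right⟩
      rwa [List.getLast?_append_of_ne_nil _ (List.cons_ne_nil _ _)] at hlast
    · obtain ⟨l, rfl⟩ : ∃ l', l = c :: l' := List.head?_eq_some_iff.1 hhead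
      exact ⟨a :: c :: l, rfl, by simpa using hlast, List.isChain_cons_cons.2 ⟨hac, hchain⟩,
        List.nodup_cons.2 ⟨ha, hnodup⟩⟩

theorem List.IsChain.rel_formPerm_apply [DecidableEq α] {l : List α} (hl : l.IsChain r)
    (hnd : l.Nodup) {x : α} (hx : x ∈ l) (hxl : l.getLast? ≠ some x) : r x (l.formPerm x) := by
  obtain ⟨i, hi, rfl⟩ := List.getElem_of_mem hx
  have hi' : i + 1 < l.length := by
    by_contra! hle
    obtain rfl : i = l.length - 1 := by omega
    simp [List.getLast?_eq_getElem?] at hxl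
  rw [List.formPerm_apply_lt_getElem l hnd i hi']
  exact hl.getElem i hi'

theorem Relation.ReflTransGen.exists_perm (h : ReflTransGen r a b) :
    ∃ σ : Perm α, σ b = a ∧ ∀ x ≠ b, σ x = x ∨ r x (σ x) := by
  classical
  obtain ⟨l, hhead, hlast, hchain, hnodup⟩ := h.exists_nodup_isChain
  refine ⟨l.formPerm, ?_, fun x hxb => ?_⟩
  · obtain ⟨l, rfl⟩ := List.head?_eq_some_iff.1 hhead
    rw [← List.getLast_of_mem_getLast? hlast]
    exact List.formPerm_apply_getLast a l
  · by_cases hx : x ∈ l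
    · exact .inr (hchain.rel_formPerm_apply hnodup hx (by simpa [hlast] using hxb.symm))
    · exact .inl (List.formPerm_apply_of_notMem hx)

theorem Equiv.Perm.reflTransGen_of_apply_eq [Finite α] {σ : Perm α} (hba : σ b = a)
    (hσ : ∀ x ≠ b, σ x = x ∨ r x (σ x)) : ReflTransGen r a b := by
  have hstep : ∀ n : ℕ, ReflTransGen r a b ∨ ReflTransGen r a ((σ ^ n) a) := by
    intro n
    induction n with
    | zero => exact .inr .refl
    | succ n ih =>
      rcases ih with h | h
      · exact .inl h
      by_cases hb : (σ ^ n) a = b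
      · exact .inl (hb ▸ h)
      · refine .inr ?_
        rw [pow_succ', Perm.mul_apply]
        rcases hσ _ hb with hfix | hedge
        · rwa [hfix]
        · exact h.tail hedge
  obtain ⟨n, hn⟩ := (show σ.SameCycle a b from ⟨-1, by simp [← hba]⟩).exists_nat_pow_eq
  simpa [hn] using hstep n

theorem Relation.reflTransGen_iff_exists_perm [Finite α] :
    ReflTransGen r a b ↔ ∃ σ : Perm α, σ b = a ∧ ∀ x ≠ b, σ x = x ∨ r x (σ x) :=
  ⟨ReflTransGen.exists_perm, fun ⟨_, hba, hσ⟩ => Perm.reflTransGen_of_apply_eq hba hσ⟩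

theorem exists_equiv_subtypeNe_iff_exists_perm {P : α → α → Prop} :
    (∃ M : {x // x ≠ b} ≃ {x // x ≠ a}, ∀ u : {x // x ≠ b}, P u (M u)) ↔
      ∃ σ : Perm α, σ b = a ∧ ∀ x ≠ b, P x (σ x) := by
  classical
  constructor
  · rintro ⟨M, hM⟩
    refine ⟨(optionSubtypeNe b).symm.trans (M.optionCongr.trans (optionSubtypeNe a)),
      by simp, fun x hx => ?_⟩
    simpa [optionSubtypeNe_symm_of_ne hx] using hM ⟨x, hx⟩
  · rintro ⟨σ, hσ, hP⟩
    exact ⟨σ.subtypeEquiv fun x => by rw [← hσ, σ.injective.ne_iff], fun u => hP _ u.2⟩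

end

theorem stmt13_general {V : Type*} [Fintype V]
    (E : V → V → Prop) (s t : V) :
    (∃ M : {v : V // v ≠ t} ≃ {v : V // v ≠ s},
        ∀ u : {v : V // v ≠ t},
          ((u : V) = ((M u : {v : V // v ≠ s}) : V) ∧ (u : V) ≠ s ∧ (u : V) ≠ t) ∨
            E (u : V) ((M u : {v : V // v ≠ s}) : V)) ↔
      Relation.ReflTransGen E s t := by
  rw [reflTransGen_iff_exists_perm,
    exists_equiv_subtypeNe_iff_exists_perm (P := fun x y => (x = y ∧ x ≠ s ∧ x ≠ t) ∨ E x y)]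
  refine exists_congr fun σ => and_congr_right fun hσ => forall₂_congr fun x hxt => or_congr_left ?_
  refine ⟨fun h => h.1.symm, fun hx => ⟨hx.symm, ?_, hxt⟩⟩
  -- `s = σ t` is not a fixed point of `σ` unless `s = t`
  rintro rfl
  exact hxt (σ.injective (hx.trans hσ.symm))

/-- The split-vertex bipartite gadget `G` built from a directed graph
`(V, E)` with source `s` (no incoming edges) and sink `t` (no outgoing edges)
has a perfect matching iff there is a directed path from `s` to `t`.  The left
side is `V \ {t}`, the right side is `V \ {s}`; `u^ℓ` and `v^r` are adjacent
iff `u = v ∉ {s, t}` (the split edge) or `(u, v) ∈ E`.  A perfect matching is a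
bijection `M` from the left side to the right side matching adjacent vertices. -/
theorem stmt13 {V : Type*} [Fintype V] [DecidableEq V]
    (E : V → V → Prop) (s t : V) (hst : s ≠ t)
    (hs : ∀ v, ¬ E v s) (ht : ∀ v, ¬ E t v) :
    (∃ M : {v : V // v ≠ t} ≃ {v : V // v ≠ s},
        ∀ u : {v : V // v ≠ t},
          ((u : V) = ((M u : {v : V // v ≠ s}) : V) ∧ (u : V) ≠ s ∧ (u : V) ≠ t) ∨
            E (u : V) ((M u : {v : V // v ≠ s}) : V)) ↔
      Relation.ReflTransGen E s t :=
  stmt13_general E s t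
end
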